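/- arXiv:math/9909152 — 5 statements merged into one kernel-verified Lean document; each statement's English description precedes it below -/
import Mathlib

section
/- Given four mutually externally tangent spheres in R^3 with pairwise distinct tangency points, the three lines through opposite pairs of tangency points are concurrent: there exists a point M lying on all three lines. -/
/-!
Let `t i j` be the tangency point of spheres `i` and `j`. It divides the segment between the
centres in the ratio `r i : r j`, i.e. it is the centre of mass of `x i` and `x j` with weights
`(r i)⁻¹` and `(r j)⁻¹`. By associativity of centres of mass, the centre of mass of all four
centres with weights `(r k)⁻¹` lies on the segment joining the centres of mass of any two
complementary pairs, hence on all three lines.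
-/

open Finset

namespace Finset

variable {R E ι : Type*} [Field R] [AddCommGroup E] [Module R E] [DecidableEq ι]

theorem centerMass_union {s t : Finset ι} (w : ι → R) (z : ι → E) (hst : Disjoint s t)
    (hs : ∑ i ∈ s, w i ≠ 0) (ht : ∑ i ∈ t, w i ≠ 0) :
    (s ∪ t).centerMass w z =
      ((∑ i ∈ s, w i) / (∑ i ∈ s, w i + ∑ i ∈ t, w i)) • s.centerMass w z +
        ((∑ i ∈ t, w i) / (∑ i ∈ s, w i + ∑ i ∈ t, w i)) • t.centerMass w z := by
  simp only [centerMass, sum_union hst, smul_add, smul_smul]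
  congr 2 <;> field_simp

theorem exists_centerMass_union_eq_smul_add_smul [LinearOrder R] [IsStrictOrderedRing R]
    {s t : Finset ι} (w : ι → R) (z : ι → E) (hst : Disjoint s t) (hs : s.Nonempty)
    (ht : t.Nonempty) (hw : ∀ i ∈ s ∪ t, 0 < w i) :
    ∃ l : R, (s ∪ t).centerMass w z = l • s.centerMass w z + (1 - l) • t.centerMass w z := by
  have hs_pos : 0 < ∑ i ∈ s, w i := sum_pos (fun i hi => hw i (mem_union_left t hi)) hs
  have ht_pos : 0 < ∑ i ∈ t, w i := sum_pos (fun i hi => hw i (mem_union_right s hi)) ht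
  refine ⟨(∑ i ∈ s, w i) / (∑ i ∈ s, w i + ∑ i ∈ t, w i), ?_⟩
  rw [centerMass_union w z hst hs_pos.ne' ht_pos.ne']
  congr 2
  field_simp
  ring

theorem centerMass_pair_inv_eq_lineMap {i j : ι} (r : ι → R) (z : ι → E)
    (hij : i ≠ j) (hi : r i ≠ 0) (hj : r j ≠ 0) (hsum : r i + r j ≠ 0) :
    ({i, j} : Finset ι).centerMass (fun k => (r k)⁻¹) z =
      AffineMap.lineMap (z i) (z j) (r i / (r i + r j)) := by
  rw [centerMass_pair _ _ _ _ hij, inv_add_inv hi hj, AffineMap.lineMap_apply_module]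
  match_scalars
  · field_simp
    ring
  · field_simp

end Finset

theorem eq_lineMap_of_dist_eq_add {E : Type*} [NormedAddCommGroup E] [NormedSpace ℝ E]
    [StrictConvexSpace ℝ E] {a b p : E} {ra rb : ℝ} (hsum : ra + rb ≠ 0)
    (hab : dist a b = ra + rb) (hpa : dist p a = ra) (hpb : dist p b = rb) :
    p = AffineMap.lineMap a b (ra / (ra + rb)) := by
  apply eq_lineMap_of_dist_eq_mul_of_dist_eq_mul
  · rw [hab, dist_comm, hpa, div_mul_cancel₀ _ hsum]
  · rw [hab, hpb, one_sub_div hsum, add_sub_cancel_left, div_mul_cancel₀ _ hsum]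

theorem tangent_spheres_opposite_lines_concurrent_general
    (x : Fin 4 → EuclideanSpace ℝ (Fin 3)) (r : Fin 4 → ℝ)
    (hr : ∀ i, 0 < r i)
    (htan : ∀ i j, i ≠ j → dist (x i) (x j) = r i + r j)
    (t : Fin 4 → Fin 4 → EuclideanSpace ℝ (Fin 3))
    (ht : ∀ i j, i ≠ j → dist (t i j) (x i) = r i ∧ dist (t i j) (x j) = r j) :
    ∃ M : EuclideanSpace ℝ (Fin 3),
      (∃ l : ℝ, M = l • t 0 1 + (1 - l) • t 2 3) ∧
      (∃ l : ℝ, M = l • t 0 2 + (1 - l) • t 1 3) ∧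
      (∃ l : ℝ, M = l • t 0 3 + (1 - l) • t 1 2) := by
  set w : Fin 4 → ℝ := fun k => (r k)⁻¹
  have htangency : ∀ i j, i ≠ j → t i j = ({i, j} : Finset (Fin 4)).centerMass w x := by
    intro i j hij
    have hsum : r i + r j ≠ 0 := (add_pos (hr i) (hr j)).ne'
    rw [centerMass_pair_inv_eq_lineMap r x hij (hr i).ne' (hr j).ne' hsum]
    exact eq_lineMap_of_dist_eq_add hsum (htan i j hij) (ht i j hij).1 (ht i j hij).2
  have hsplit : ∀ i j k l : Fin 4, i ≠ j → k ≠ l →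
      Disjoint ({i, j} : Finset (Fin 4)) {k, l} → ({i, j} ∪ {k, l} : Finset (Fin 4)) = univ →
      ∃ c : ℝ, univ.centerMass w x = c • t i j + (1 - c) • t k l := by
    intro i j k l hij hkl hdisj hunion
    rw [htangency i j hij, htangency k l hkl, ← hunion]
    exact exists_centerMass_union_eq_smul_add_smul w x hdisj (insert_nonempty _ _)
      (insert_nonempty _ _) fun m _ => inv_pos.2 (hr m)
  exact ⟨univ.centerMass w x, hsplit 0 1 2 3 (by decide) (by decide) (by decide) (by decide),
    hsplit 0 2 1 3 (by decide) (by decide) (by decide) (by decide),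
    hsplit 0 3 1 2 (by decide) (by decide) (by decide) (by decide)⟩

/-- For four mutually externally tangent spheres in `ℝ³` with pairwise distinct
tangency points, the three lines through opposite pairs of tangencies are
concurrent. -/
theorem tangent_spheres_opposite_lines_concurrent
    (x : Fin 4 → EuclideanSpace ℝ (Fin 3)) (r : Fin 4 → ℝ)
    (hr : ∀ i, 0 < r i)
    (htan : ∀ i j, i ≠ j → dist (x i) (x j) = r i + r j)
    (t : Fin 4 → Fin 4 → EuclideanSpace ℝ (Fin 3))
    (ht : ∀ i j, i ≠ j → dist (t i j) (x i) = r i ∧ dist (t i j) (x j) = r j)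
    (hdistinct : Function.Injective fun p : {p : Fin 4 × Fin 4 // p.1 < p.2} =>
      t p.1.1 p.1.2) :
    ∃ M : EuclideanSpace ℝ (Fin 3),
      (∃ l : ℝ, M = l • t 0 1 + (1 - l) • t 2 3) ∧
      (∃ l : ℝ, M = l • t 0 2 + (1 - l) • t 1 3) ∧
      (∃ l : ℝ, M = l • t 0 3 + (1 - l) • t 1 2) :=
  tangent_spheres_opposite_lines_concurrent_general x r hr htan t ht
end

section
/- Given four mutually externally tangent circles in R^2, the three lines through opposite pairs of tangency points are concurrent. -/
/-!
The tangency point of circles `i` and `j` divides the segment `x i x j` in the ratio `r i : r j`,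
so it is the centre of mass of the masses `1 / r i` at `x i` and `1 / r j` at `x j`. The centre of
mass of all four masses can be computed by first grouping them in complementary pairs, so it lies
on each of the three lines through opposite tangency points.
-/

open Finset

theorem eq_lineMap_of_dist_eq_of_dist_add_dist {V P : Type*} [NormedAddCommGroup V]
    [NormedSpace ℝ V] [StrictConvexSpace ℝ V] [MetricSpace P] [NormedAddTorsor V P]
    {a b p : P} {r s : ℝ} (hpa : dist p a = r) (hpb : dist p b = s) (hab : dist a b = r + s) :
    p = AffineMap.lineMap a b (r / (r + s)) := by
  rcases eq_or_ne (r + s) 0 with hrs | hrs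
  · have hr : r = 0 := by linarith [dist_nonneg (x := p) (y := a), dist_nonneg (x := p) (y := b)]
    rw [hr, zero_div, AffineMap.lineMap_apply_zero, ← dist_eq_zero, hpa, hr]
  · apply eq_lineMap_of_dist_eq_mul_of_dist_eq_mul
    · rw [dist_comm, hpa, hab, div_mul_cancel₀ _ hrs]
    · rw [hpb, hab, one_sub_div hrs, div_mul_cancel₀ _ hrs, add_sub_cancel_left]

theorem Finset.centerMass_union_s4 {R E ι : Type*} [Field R] [AddCommGroup E] [Module R E]
    [DecidableEq ι] {s t : Finset ι} {w : ι → R} (z : ι → E) (hst : Disjoint s t)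
    (hs : ∑ i ∈ s, w i ≠ 0) (ht : ∑ i ∈ t, w i ≠ 0) (hw : ∑ i ∈ s ∪ t, w i ≠ 0) :
    (s ∪ t).centerMass w z =
      ((∑ i ∈ s, w i) / ∑ i ∈ s ∪ t, w i) • s.centerMass w z +
        (1 - (∑ i ∈ s, w i) / ∑ i ∈ s ∪ t, w i) • t.centerMass w z := by
  rw [sum_union hst] at hw ⊢
  simp only [centerMass, sum_union hst, smul_add, smul_smul]
  rw [one_sub_div hw, add_sub_cancel_left]
  congr 2 <;> field_simp

theorem eq_centerMass_inv_pair_of_dist {ι E : Type*} [DecidableEq ι] [NormedAddCommGroup E]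
    [NormedSpace ℝ E] [StrictConvexSpace ℝ E] {x : ι → E} {r : ι → ℝ} {i j : ι} {p : E}
    (hij : i ≠ j) (hi : 0 < r i) (hj : 0 < r j)
    (hpi : dist p (x i) = r i) (hpj : dist p (x j) = r j) (hx : dist (x i) (x j) = r i + r j) :
    p = ({i, j} : Finset ι).centerMass (fun k ↦ (r k)⁻¹) x := by
  rw [eq_lineMap_of_dist_eq_of_dist_add_dist hpi hpj hx, AffineMap.lineMap_apply_module,
    centerMass_pair _ _ _ _ hij]
  match_scalars <;> field_simp <;> ring

/-- For four mutually externally tangent circles in `ℝ²`, the three lines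
through opposite pairs of tangency points are concurrent. -/
theorem tangent_circles_opposite_lines_concurrent
    (x : Fin 4 → EuclideanSpace ℝ (Fin 2)) (r : Fin 4 → ℝ)
    (hr : ∀ i, 0 < r i)
    (htan : ∀ i j, i ≠ j → dist (x i) (x j) = r i + r j)
    (t : Fin 4 → Fin 4 → EuclideanSpace ℝ (Fin 2))
    (ht : ∀ i j, i ≠ j → dist (t i j) (x i) = r i ∧ dist (t i j) (x j) = r j) :
    ∃ M : EuclideanSpace ℝ (Fin 2),
      (∃ l : ℝ, M = l • t 0 1 + (1 - l) • t 2 3) ∧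
      (∃ l : ℝ, M = l • t 0 2 + (1 - l) • t 1 3) ∧
      (∃ l : ℝ, M = l • t 0 3 + (1 - l) • t 1 2) := by
  set w : Fin 4 → ℝ := fun k ↦ (r k)⁻¹
  have hw : ∀ s : Finset (Fin 4), s.Nonempty → ∑ k ∈ s, w k ≠ 0 := fun s hs ↦
    (sum_pos (fun k _ ↦ inv_pos.mpr (hr k)) hs).ne'
  have ht_eq : ∀ i j, i ≠ j → t i j = ({i, j} : Finset (Fin 4)).centerMass w x := fun i j hij ↦
    eq_centerMass_inv_pair_of_dist hij (hr i) (hr j) (ht i j hij).1 (ht i j hij).2 (htan i j hij)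
  have split : ∀ i j k l : Fin 4, i ≠ j → k ≠ l → Disjoint ({i, j} : Finset (Fin 4)) {k, l} →
      {i, j} ∪ {k, l} = univ → ∃ c : ℝ, univ.centerMass w x = c • t i j + (1 - c) • t k l :=
    fun i j k l hij hkl hdisj hunion ↦ ⟨_, by
      rw [ht_eq i j hij, ht_eq k l hkl, ← hunion]
      exact centerMass_union_s4 x hdisj (hw _ (by simp)) (hw _ (by simp)) (hw _ (by simp))⟩
  exact ⟨univ.centerMass w x, split 0 1 2 3 (by decide) (by decide) (by decide) (by decide),
    split 0 2 1 3 (by decide) (by decide) (by decide) (by decide),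
    split 0 3 1 2 (by decide) (by decide) (by decide) (by decide)⟩
end

section
/- Let ABC be a nondegenerate triangle with tangency points t_{BC} on BC, t_{AC} on AC, t_{AB} on AB of the three mutually tangent circles centered at the vertices (equivalently, the incircle touch points). Then the three lines A t_{BC}, B t_{AC}, C t_{AB} are concurrent (at the Gergonne point). -/
/-!
In barycentric coordinates the touch points are `t_BC = (z B + y C)/(y + z)` and its cyclic
analogues, where `x, y, z` are the tangent lengths from `A, B, C`. Hence the point with
barycentric coordinates `(y z : x z : x y)`, i.e. `(1/x : 1/y : 1/z)`, lies on all three cevians;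
it is well defined as soon as `x y + y z + z x ≠ 0`, which holds because at most one tangent
length vanishes.
-/

lemma smul_eq_add_smul_of_mem_segment {V : Type*} [NormedAddCommGroup V] [NormedSpace ℝ V]
    {P Q t : V} (ht : t ∈ segment ℝ P Q) :
    (dist t P + dist t Q) • t = dist t Q • P + dist t P • Q := by
  rw [segment_eq_image_lineMap] at ht
  obtain ⟨s, ⟨hs₀, hs₁⟩, rfl⟩ := ht
  rw [dist_lineMap_left, dist_lineMap_right, Real.norm_of_nonneg hs₀,
    Real.norm_of_nonneg (sub_nonneg.mpr hs₁), AffineMap.lineMap_apply_module]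
  module

lemma exists_eq_smul_add_smul_of_barycentric {K V : Type*} [Field K] [AddCommGroup V]
    [Module K V] {A B C G P : V} {α β γ : K} (hS : α + β + γ ≠ 0)
    (hG : (α + β + γ) • G = α • A + β • B + γ • C)
    (hP : (β + γ) • P = β • B + γ • C) :
    ∃ l : K, G = l • A + (1 - l) • P := by
  refine ⟨α / (α + β + γ), smul_right_injective V hS ?_⟩
  have h1 : (α + β + γ) * (α / (α + β + γ)) = α := by field_simp
  have h2 : (α + β + γ) * (1 - α / (α + β + γ)) = β + γ := by field_simp; ring
  simp only [smul_add, smul_smul, h1, h2, hG, hP]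
  abel

lemma mul_add_mul_add_mul_pos {x y z : ℝ} (hx : 0 ≤ x) (hy : 0 ≤ y) (hz : 0 ≤ z)
    (hxy : 0 < x + y) (hyz : 0 < y + z) (hxz : 0 < x + z) :
    0 < x * y + y * z + x * z := by
  rcases hx.eq_or_lt with rfl | hx
  · nlinarith
  · rcases hy.eq_or_lt with rfl | hy
    · nlinarith
    · nlinarith [mul_pos hx hy]

lemma exists_mem_cevians_of_tangent_lengths {K V : Type*} [Field K] [AddCommGroup V]
    [Module K V] {A B C P Q R : V} {x y z : K} (hS : x * y + y * z + x * z ≠ 0)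
    (hP : (y + z) • P = z • B + y • C) (hQ : (z + x) • Q = x • C + z • A)
    (hR : (x + y) • R = y • A + x • B) :
    ∃ G : V, (∃ l : K, G = l • A + (1 - l) • P) ∧
      (∃ l : K, G = l • B + (1 - l) • Q) ∧ (∃ l : K, G = l • C + (1 - l) • R) := by
  obtain ⟨G, hG⟩ : ∃ G : V,
      (x * y + y * z + x * z) • G = (y * z) • A + (x * z) • B + (x * y) • C :=
    ⟨_, smul_inv_smul₀ hS _⟩
  refine ⟨G, ?_, ?_, ?_⟩
  · refine exists_eq_smul_add_smul_of_barycentric (B := B) (C := C)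
      (α := y * z) (β := x * z) (γ := x * y) (by convert hS using 1; ring) ?_ ?_
    · linear_combination (norm := module) hG
    · linear_combination (norm := module) x • hP
  · refine exists_eq_smul_add_smul_of_barycentric (B := C) (C := A)
      (α := x * z) (β := x * y) (γ := y * z) (by convert hS using 1; ring) ?_ ?_
    · linear_combination (norm := module) hG
    · linear_combination (norm := module) y • hQ
  · refine exists_eq_smul_add_smul_of_barycentric (B := A) (C := B)
      (α := x * y) (β := y * z) (γ := x * z) hS ?_ ?_
    · linear_combination (norm := module) hG
    · linear_combination (norm := module) z • hR

/-- The three cevians from the vertices of a nondegenerate triangle to the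
opposite incircle touch points are concurrent (at the Gergonne point). -/
theorem gergonne_cevians_concurrent
    (A B C : EuclideanSpace ℝ (Fin 2))
    (hnc : ¬ Collinear ℝ ({A, B, C} : Set (EuclideanSpace ℝ (Fin 2))))
    (a b c : ℝ)
    (ha : a = dist B C) (hb : b = dist C A) (hc : c = dist A B)
    (tBC tCA tAB : EuclideanSpace ℝ (Fin 2))
    (htBC : dist tBC B = (a - b + c) / 2 ∧ dist tBC C = (a + b - c) / 2 ∧
      tBC ∈ segment ℝ B C)
    (htCA : dist tCA C = (a + b - c) / 2 ∧ dist tCA A = (-a + b + c) / 2 ∧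
      tCA ∈ segment ℝ C A)
    (htAB : dist tAB A = (-a + b + c) / 2 ∧ dist tAB B = (a - b + c) / 2 ∧
      tAB ∈ segment ℝ A B) :
    ∃ G : EuclideanSpace ℝ (Fin 2),
      (∃ l : ℝ, G = l • A + (1 - l) • tBC) ∧
      (∃ l : ℝ, G = l • B + (1 - l) • tCA) ∧
      (∃ l : ℝ, G = l • C + (1 - l) • tAB) := by
  obtain ⟨hyB, hzC, hBC⟩ := htBC
  obtain ⟨hzC', hxA, hCA⟩ := htCA
  obtain ⟨hxA', hyB', hAB⟩ := htAB
  set x := (-a + b + c) / 2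
  set y := (a - b + c) / 2
  set z := (a + b - c) / 2
  have footA := smul_eq_add_smul_of_mem_segment hBC
  have footB := smul_eq_add_smul_of_mem_segment hCA
  have footC := smul_eq_add_smul_of_mem_segment hAB
  rw [hyB, hzC] at footA
  rw [hzC', hxA] at footB
  rw [hxA', hyB'] at footC
  have hc₀ : 0 < x + y := by
    rw [show x + y = c by ring, hc]; exact dist_pos.mpr (ne₁₂_of_not_collinear hnc)
  have ha₀ : 0 < y + z := by
    rw [show y + z = a by ring, ha]; exact dist_pos.mpr (ne₂₃_of_not_collinear hnc)
  have hb₀ : 0 < x + z := by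
    rw [show x + z = b by ring, hb]; exact dist_pos.mpr (ne₁₃_of_not_collinear hnc).symm
  exact exists_mem_cevians_of_tangent_lengths
    (mul_add_mul_add_mul_pos (hxA ▸ dist_nonneg) (hyB ▸ dist_nonneg) (hzC ▸ dist_nonneg)
      hc₀ ha₀ hb₀).ne' footA footB footC
end

section
/- Let ABC be a nondegenerate triangle, let O_A, O_B, O_C be the three mutually externally tangent circles centered at the vertices, and let O_S be a circle externally tangent to all three. Then the three lines t_{AS}t_{BC}, t_{BS}t_{AC}, t_{CS}t_{AB} through opposite tangency points are concurrent at the point M = (R_A A + R_B B + R_C C + R_S S)/(R_A + R_B + R_C + R_S), where R_X is the reciprocal of the radius of O_X and S is the center of O_S. -/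
/-!
The tangency point of two externally tangent circles with centers `X, Y` and radii `r, s`
divides `XY` in the ratio `r : s`, so it is the barycenter of `X, Y` with weights `1/r, 1/s`.
Hence `t_{AS}` and `t_{BC}` are the barycenters of `{A, S}` and `{B, C}` with reciprocal-radius
weights, and by associativity of barycenters the barycenter `M` of all four centers lies on the
line through them; likewise for the other two pairings.
-/

open AffineMap

theorem not_collinear_rotate {k V P : Type*} [DivisionRing k] [AddCommGroup V] [Module k V]
    [AddTorsor V P] {A B C : P} (h : ¬Collinear k ({A, B, C} : Set P)) :
    ¬Collinear k ({C, A, B} : Set P) := by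
  rwa [Set.insert_comm, Set.pair_comm]

theorem dist_lt_dist_add_dist_of_not_collinear {V P : Type*} [NormedAddCommGroup V]
    [NormedSpace ℝ V] [StrictConvexSpace ℝ V] [MetricSpace P] [NormedAddTorsor V P] {A B C : P}
    (h : ¬Collinear ℝ ({A, B, C} : Set P)) : dist B C < dist A B + dist C A := by
  rw [dist_comm A B, dist_comm C A, dist_lt_dist_add_dist_iff]
  intro hw
  have hcol := hw.collinear
  rw [Set.insert_comm] at hcol
  exact h hcol

theorem eq_inv_smul_of_dist_eq_add {E : Type*} [NormedAddCommGroup E] [NormedSpace ℝ E]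
    [StrictConvexSpace ℝ E] {X Y t : E} {r s : ℝ} (hr : 0 < r) (hs : 0 < s)
    (htX : dist t X = r) (htY : dist t Y = s) (hXY : dist X Y = r + s) :
    t = (r⁻¹ + s⁻¹)⁻¹ • (r⁻¹ • X + s⁻¹ • Y) := by
  have hline : t = lineMap X Y (r / (r + s)) :=
    eq_lineMap_of_dist_eq_mul_of_dist_eq_mul (by rw [dist_comm, htX, hXY]; field_simp)
      (by rw [htY, hXY]; field_simp; ring)
  rw [hline, lineMap_apply_module]
  match_scalars <;> field_simp <;> ring

theorem exists_inv_smul_eq_combination_of_pair_means {𝕜 V : Type*} [Field 𝕜] [AddCommGroup V]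
    [Module 𝕜 V] {a b c d T : 𝕜} {p q r s v : V}
    (hT : a + b + c + d = T) (hv : a • p + b • q + c • r + d • s = v)
    (hab : a + b ≠ 0) (hcd : c + d ≠ 0) (hT0 : T ≠ 0) :
    ∃ l : 𝕜, T⁻¹ • v = l • ((a + b)⁻¹ • (a • p + b • q)) +
      (1 - l) • ((c + d)⁻¹ • (c • r + d • s)) := by
  subst hT hv
  refine ⟨(a + b) / (a + b + c + d), ?_⟩
  match_scalars <;> field_simp <;> ring

/-- For a nondegenerate triangle with its three mutually externally tangent
vertex circles and a circle `O_S` (center `S`, radius `rS`) externally tangent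
to all three, the three lines through opposite tangency points are concurrent
at `M = (R_A A + R_B B + R_C C + R_S S)/(R_A + R_B + R_C + R_S)`. -/
theorem opposite_tangency_lines_concurrent_at_M
    (A B C S : EuclideanSpace ℝ (Fin 2))
    (hnc : ¬ Collinear ℝ ({A, B, C} : Set (EuclideanSpace ℝ (Fin 2))))
    (a b c rA rB rC rS : ℝ)
    (ha : a = dist B C) (hb : b = dist C A) (hc : c = dist A B)
    (hrA : rA = (-a + b + c) / 2)
    (hrB : rB = (a - b + c) / 2)
    (hrC : rC = (a + b - c) / 2)
    (hrS : 0 < rS)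
    (hSA : dist S A = rS + rA) (hSB : dist S B = rS + rB)
    (hSC : dist S C = rS + rC)
    (tAB tBC tCA tAS tBS tCS : EuclideanSpace ℝ (Fin 2))
    (htAB : dist tAB A = rA ∧ dist tAB B = rB)
    (htBC : dist tBC B = rB ∧ dist tBC C = rC)
    (htCA : dist tCA C = rC ∧ dist tCA A = rA)
    (htAS : dist tAS A = rA ∧ dist tAS S = rS)
    (htBS : dist tBS B = rB ∧ dist tBS S = rS)
    (htCS : dist tCS C = rC ∧ dist tCS S = rS)
    (RA RB RC RS : ℝ)
    (hRA : RA = rA⁻¹) (hRB : RB = rB⁻¹) (hRC : RC = rC⁻¹) (hRS : RS = rS⁻¹)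
    (M : EuclideanSpace ℝ (Fin 2))
    (hM : M = ((RA + RB + RC + RS)⁻¹) • (RA • A + RB • B + RC • C + RS • S)) :
    (∃ l : ℝ, M = l • tAS + (1 - l) • tBC) ∧
    (∃ l : ℝ, M = l • tBS + (1 - l) • tCA) ∧
    (∃ l : ℝ, M = l • tCS + (1 - l) • tAB) := by
  subst ha hb hc hRA hRB hRC hRS hM
  have hnc' := not_collinear_rotate hnc
  have hBC := dist_lt_dist_add_dist_of_not_collinear hnc
  have hAB := dist_lt_dist_add_dist_of_not_collinear hnc'
  have hCA := dist_lt_dist_add_dist_of_not_collinear (not_collinear_rotate hnc')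
  have hrA_pos : 0 < rA := by linarith
  have hrB_pos : 0 < rB := by linarith
  have hrC_pos : 0 < rC := by linarith
  rw [eq_inv_smul_of_dist_eq_add hrA_pos hrS htAS.1 htAS.2 (by rw [dist_comm]; linarith),
    eq_inv_smul_of_dist_eq_add hrB_pos hrS htBS.1 htBS.2 (by rw [dist_comm]; linarith),
    eq_inv_smul_of_dist_eq_add hrC_pos hrS htCS.1 htCS.2 (by rw [dist_comm]; linarith),
    eq_inv_smul_of_dist_eq_add hrA_pos hrB_pos htAB.1 htAB.2 (by linarith),
    eq_inv_smul_of_dist_eq_add hrB_pos hrC_pos htBC.1 htBC.2 (by linarith),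
    eq_inv_smul_of_dist_eq_add hrC_pos hrA_pos htCA.1 htCA.2 (by linarith)]
  refine ⟨?_, ?_, ?_⟩ <;>
    refine exists_inv_smul_eq_combination_of_pair_means (by ring) (by abel) ?_ ?_ ?_ <;>
    positivity
end

section
/- Let ABC be a nondegenerate triangle, O_A the circle centered at A with radius (-a+b+c)/2, t_{BC} the tangency point of the circles centered at B and C, and O_S the inner Soddy circle with tangency point t_{AS} on O_A. Let ℓ_A be the line through A perpendicular to BC. Then the line through t_{AS} and t_{BC} meets ℓ_A at a point lying on the circle O_A; i.e., ℓ_A, the line t_{AS}t_{BC}, and the circle O_A have a common point. -/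
/-!
Write `T = t_{BC}` and `κ = 4 r_B r_C / a`. Every circle `(X, r)` externally tangent to both
`O_B` and `O_C` satisfies `⟪X - T, C - B⟫ = r (r_B - r_C)` (subtract the two tangency
conditions) and `‖X - T‖² = r² + κ r` (Stewart's theorem on the cevian `XT`). Both `(A, r_A)`
and `(S, r_S)` are such circles, and the point `p` of the line `t_{AS} T` with
`2 r_S (p - A) = r_A (S - T) - r_S (A - T)` is the common point: the two inner products with
`C - B` cancel, and in `‖p - A‖²` the terms in `κ` cancel, leaving `r_A²`.
-/

open AffineMap
open scoped RealInnerProductSpace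

theorem eq_lineMap_of_dist_eq_add_s14 {E P : Type*} [NormedAddCommGroup E] [NormedSpace ℝ E]
    [StrictConvexSpace ℝ E] [MetricSpace P] [NormedAddTorsor E P] {p q t : P} {r s : ℝ}
    (hpq : dist p q = r + s) (htp : dist t p = r) (htq : dist t q = s) :
    t = lineMap p q (r / (r + s)) := by
  rcases eq_or_ne (r + s) 0 with hrs | hrs
  · have hr : r = 0 := by
      linarith [htp ▸ dist_nonneg (x := t) (y := p), htq ▸ dist_nonneg (x := t) (y := q)]
    rw [hr, zero_div, lineMap_apply_zero, ← dist_eq_zero, htp, hr]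
  · apply eq_lineMap_of_dist_eq_mul_of_dist_eq_mul
    · rw [dist_comm, htp, hpq, div_mul_cancel₀ _ hrs]
    · rw [htq, hpq, sub_mul, one_mul, div_mul_cancel₀ _ hrs, add_sub_cancel_left]

variable {V : Type*} [NormedAddCommGroup V] [InnerProductSpace ℝ V]

theorem inner_sub_sub_eq_of_dist_eq_add {b c t x : V} {y z r : ℝ}
    (htb : dist t b = y) (htc : dist t c = z) (hxb : dist x b = r + y) (hxc : dist x c = r + z) :
    ⟪x - t, c - b⟫ = r * (y - z) := by
  rw [dist_eq_norm] at htb htc hxb hxc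
  have hb := norm_sub_sq_real (x - t) (b - t)
  have hc := norm_sub_sq_real (x - t) (c - t)
  rw [sub_sub_sub_cancel_right, hxb, norm_sub_rev b, htb] at hb
  rw [sub_sub_sub_cancel_right, hxc, norm_sub_rev c, htc] at hc
  rw [← sub_sub_sub_cancel_right c b t, inner_sub_right]
  linear_combination (hc - hb) / 2

theorem norm_sub_sq_eq_of_dist_eq_add {b c t x : V} {y z r : ℝ} (hbc : dist b c = y + z)
    (htb : dist t b = y) (htc : dist t c = z) (hxb : dist x b = r + y) (hxc : dist x c = r + z) :
    ‖x - t‖ ^ 2 = r ^ 2 + r * (4 * y * z / (y + z)) := by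
  have ht := eq_lineMap_of_dist_eq_add_s14 hbc htb htc
  rcases eq_or_ne (y + z) 0 with hyz | hyz
  · rw [hyz, div_zero, lineMap_apply_zero] at ht
    have hy : y = 0 := by rw [← htb, ht, dist_self]
    rw [ht, ← dist_eq_norm, hxb, hy]
    ring
  · have hsmul : (y + z) • (x - t) = z • (x - b) + y • (x - c) := by
      rw [ht, lineMap_apply_module]
      match_scalars <;> field_simp <;> ring
    rw [dist_eq_norm] at hbc hxb hxc
    have hbc' := norm_sub_sq_real (x - b) (x - c)
    rw [sub_sub_sub_cancel_left, norm_sub_rev, hbc, hxb, hxc] at hbc'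
    have hn := congrArg (‖·‖ ^ 2) hsmul
    simp only [norm_add_sq_real, norm_smul, mul_pow, Real.norm_eq_abs, sq_abs,
      real_inner_smul_left, real_inner_smul_right, hxb, hxc] at hn
    field_simp
    apply mul_left_cancel₀ hyz
    linear_combination hn + y * z * hbc'

theorem smul_sub_eq_of_eq_lineMap {a s t u : V} {ra rs : ℝ} (hrs : rs ≠ 0) (hsum : ra + rs ≠ 0)
    (hu : u = lineMap a s (ra / (ra + rs))) :
    (2 * rs) • (((ra + rs) / (2 * rs)) • u + (1 - (ra + rs) / (2 * rs)) • t - a)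
      = ra • (s - t) - rs • (a - t) := by
  rw [hu, lineMap_apply_module]
  match_scalars <;> field_simp <;> ring

theorem inner_sub_eq_zero_of_smul_sub_eq {a b c s t p : V} {ra rb rc rs : ℝ} (hrs : rs ≠ 0)
    (htb : dist t b = rb) (htc : dist t c = rc) (hab : dist a b = ra + rb)
    (hac : dist a c = ra + rc) (hsb : dist s b = rs + rb) (hsc : dist s c = rs + rc)
    (hp : (2 * rs) • (p - a) = ra • (s - t) - rs • (a - t)) :
    ⟪p - a, c - b⟫ = 0 := by
  have h := congrArg (⟪·, c - b⟫) hp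
  rw [inner_sub_left] at h
  simp only [real_inner_smul_left,
    inner_sub_sub_eq_of_dist_eq_add htb htc hsb hsc,
    inner_sub_sub_eq_of_dist_eq_add htb htc hab hac] at h
  have : 2 * rs * ⟪p - a, c - b⟫ = 0 := by linear_combination h
  simpa [hrs] using this

theorem dist_eq_of_smul_sub_eq {a b c s t p : V} {ra rb rc rs : ℝ} (hrs : rs ≠ 0) (hra : 0 ≤ ra)
    (hbc : dist b c = rb + rc) (htb : dist t b = rb) (htc : dist t c = rc)
    (hab : dist a b = ra + rb) (hac : dist a c = ra + rc) (hsb : dist s b = rs + rb)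
    (hsc : dist s c = rs + rc) (hsa : dist s a = rs + ra)
    (hp : (2 * rs) • (p - a) = ra • (s - t) - rs • (a - t)) :
    dist p a = ra := by
  have hst := norm_sub_sq_eq_of_dist_eq_add hbc htb htc hsb hsc
  have hat := norm_sub_sq_eq_of_dist_eq_add hbc htb htc hab hac
  have hsa' := norm_sub_sq_real (s - t) (a - t)
  rw [sub_sub_sub_cancel_right, ← dist_eq_norm, hsa, hst, hat] at hsa'
  have h := congrArg (‖·‖ ^ 2) hp
  rw [norm_sub_sq_real] at h
  simp only [norm_smul, mul_pow, Real.norm_eq_abs, sq_abs,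
    real_inner_smul_left, real_inner_smul_right, hst, hat] at h
  have key : (2 * rs) ^ 2 * ‖p - a‖ ^ 2 = (2 * rs) ^ 2 * ra ^ 2 := by
    linear_combination h - ra * rs * hsa'
  rw [dist_eq_norm, ← sq_eq_sq₀ (norm_nonneg _) hra]
  exact mul_left_cancel₀ (pow_ne_zero 2 (mul_ne_zero two_ne_zero hrs)) key

theorem altitude_line_tangency_line_circle_coincident_general
    (A B C S : EuclideanSpace ℝ (Fin 2))
    (a b c rA rB rC rS : ℝ)
    (ha : a = dist B C) (hb : b = dist C A) (hc : c = dist A B)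
    (hrA : rA = (-a + b + c) / 2)
    (hrB : rB = (a - b + c) / 2)
    (hrC : rC = (a + b - c) / 2)
    (hrS : 0 < rS)
    (hSA : dist S A = rS + rA) (hSB : dist S B = rS + rB)
    (hSC : dist S C = rS + rC)
    (tBC tAS : EuclideanSpace ℝ (Fin 2))
    (htBC : dist tBC B = rB ∧ dist tBC C = rC)
    (htAS : dist tAS A = rA ∧ dist tAS S = rS) :
    ∃ p : EuclideanSpace ℝ (Fin 2),
      -- p lies on ℓ_A, the line through A perpendicular to BC
      (inner ℝ (p - A) (C - B) : ℝ) = 0 ∧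
      -- p lies on the line through t_{AS} and t_{BC}
      (∃ l : ℝ, p = l • tAS + (1 - l) • tBC) ∧
      -- p lies on the circle O_A
      dist p A = rA := by
  have hrA0 : 0 ≤ rA := htAS.1 ▸ dist_nonneg
  have hBC : dist B C = rB + rC := by linarith
  have hAB : dist A B = rA + rB := by linarith
  have hAC : dist A C = rA + rC := by rw [dist_comm]; linarith
  have hAS : dist A S = rA + rS := by rw [dist_comm, hSA, add_comm]
  have htAS' := eq_lineMap_of_dist_eq_add_s14 hAS htAS.1 htAS.2
  have hp := smul_sub_eq_of_eq_lineMap (t := tBC) hrS.ne' (by positivity) htAS'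
  exact ⟨_, inner_sub_eq_zero_of_smul_sub_eq hrS.ne' htBC.1 htBC.2 hAB hAC hSB hSC hp, ⟨_, rfl⟩,
    dist_eq_of_smul_sub_eq hrS.ne' hrA0 hBC htBC.1 htBC.2 hAB hAC hSB hSC hSA hp⟩

/-- The altitude line `ℓ_A` through `A` perpendicular to `BC`, the line
`t_{AS} t_{BC}`, and the circle `O_A` have a common point. -/
theorem altitude_line_tangency_line_circle_coincident
    (A B C S : EuclideanSpace ℝ (Fin 2))
    (hnc : ¬ Collinear ℝ ({A, B, C} : Set (EuclideanSpace ℝ (Fin 2))))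
    (a b c rA rB rC rS : ℝ)
    (ha : a = dist B C) (hb : b = dist C A) (hc : c = dist A B)
    (hrA : rA = (-a + b + c) / 2)
    (hrB : rB = (a - b + c) / 2)
    (hrC : rC = (a + b - c) / 2)
    (hrS : 0 < rS)
    (hSA : dist S A = rS + rA) (hSB : dist S B = rS + rB)
    (hSC : dist S C = rS + rC)
    (tBC tAS : EuclideanSpace ℝ (Fin 2))
    (htBC : dist tBC B = rB ∧ dist tBC C = rC)
    (htAS : dist tAS A = rA ∧ dist tAS S = rS) :
    ∃ p : EuclideanSpace ℝ (Fin 2),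
      -- p lies on ℓ_A, the line through A perpendicular to BC
      (inner ℝ (p - A) (C - B) : ℝ) = 0 ∧
      -- p lies on the line through t_{AS} and t_{BC}
      (∃ l : ℝ, p = l • tAS + (1 - l) • tBC) ∧
      -- p lies on the circle O_A
      dist p A = rA :=
  altitude_line_tangency_line_circle_coincident_general A B C S a b c rA rB rC rS ha hb hc hrA hrB
    hrC hrS hSA hSB hSC tBC tAS htBC htAS
end
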